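/- arXiv:2007.05284 — 3 statements merged into one kernel-verified Lean document; each statement's English description precedes it below -/
import Mathlib

section
/- If an abstract argumentation framework (Args, ⤳) with Args finite is well-founded (i.e., the attack relation is acyclic, equivalently there is no infinite attack chain), then its grounded extension is a stable extension. -/
/-- In an AF `(Args, att)`, a set `E` defends argument `a` iff every attacker of `a`
is attacked by some element of `E`. -/
def defends {A : Type} (att : A → A → Prop) (E : Set A) (a : A) : Prop :=
  ∀ b, att b a → ∃ c ∈ E, att c b

/-- `G_0` is the set of unattacked arguments; `G_{i+1}` is the set of arguments
defended by `G_i`. -/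
def groundedSeq {A : Type} (att : A → A → Prop) : ℕ → Set A
  | 0 => {a | ∀ b, ¬ att b a}
  | n + 1 => {a | defends att (groundedSeq att n) a}

/-- The grounded extension `⋃ i, G_i`. -/
def grounded {A : Type} (att : A → A → Prop) : Set A :=
  ⋃ i, groundedSeq att i

lemma defends_mono {A : Type} (att : A → A → Prop) {E F : Set A} (h : E ⊆ F) {a : A}
    (hd : defends att E a) : defends att F a := by
  intro b hb
  obtain ⟨c, hc, hcb⟩ := hd b hb
  exact ⟨c, h hc, hcb⟩

lemma groundedSeq_succ_mono {A : Type} (att : A → A → Prop) :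
    ∀ n, groundedSeq att n ⊆ groundedSeq att (n + 1) := by
  intro n
  induction n with
  | zero => intro a ha b hb; exact absurd hb (ha b)
  | succ k ih => intro a ha; exact defends_mono att ih ha

lemma groundedSeq_mono {A : Type} (att : A → A → Prop) {i j : ℕ} (h : i ≤ j) :
    groundedSeq att i ⊆ groundedSeq att j := by
  induction h with
  | refl => exact subset_rfl
  | step _ ih => exact ih.trans (groundedSeq_succ_mono att _)

lemma mem_grounded {A : Type} {att : A → A → Prop} {a : A} {n : ℕ}
    (h : a ∈ groundedSeq att n) : a ∈ grounded att :=
  Set.mem_iUnion.2 ⟨n, h⟩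

/-- conflict-freeness -/
lemma grounded_cf {A : Type} (att : A → A → Prop) :
    ∀ N m n a b, m + n ≤ N → a ∈ groundedSeq att m → b ∈ groundedSeq att n →
      att a b → False := by
  intro N
  induction N with
  | zero =>
    intro m n a b hle ha hb hab
    obtain rfl : n = 0 := by omega
    exact hb a hab
  | succ N ih =>
    intro m n a b hle ha hb hab
    match n with
    | 0 => exact hb a hab
    | k + 1 =>
      obtain ⟨c, hc, hca⟩ := hb a hab
      exact ih k m c a (by omega) hc ha hca

/-- If a finite AF is well-founded (no infinite attack chain, equivalently, in the
finite case, acyclic attack relation), then its grounded extension is stable: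
it is conflict-free and attacks every argument outside it.  `att b a` reads
"`b` attacks `a`", so `WellFounded att` states there is no infinite attack chain. -/
theorem grounded_is_stable_of_wellFounded {A : Type} [Fintype A]
    (att : A → A → Prop) (hwf : WellFounded att) :
    (∀ a ∈ grounded att, ∀ b ∈ grounded att, ¬ att a b) ∧
    (∀ a, a ∉ grounded att → ∃ b ∈ grounded att, att b a) := by
  constructor
  · intro a ha b hb hab
    obtain ⟨_, ⟨m, rfl⟩, ha⟩ := ha
    obtain ⟨_, ⟨n, rfl⟩, hb⟩ := hb
    exact grounded_cf att (m + n) m n a b le_rfl ha hb hab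
  · have key : ∀ a, a ∈ grounded att ∨ ∃ b ∈ grounded att, att b a := by
      intro a
      induction a using hwf.induction with
      | _ a IH =>
        by_cases h : ∃ b, att b a ∧ b ∈ grounded att
        · obtain ⟨b, hba, hb⟩ := h
          exact Or.inr ⟨b, hb, hba⟩
        · left
          push_neg at h
          -- every attacker of a is attacked by grounded
          have hatt : ∀ b, att b a → ∃ n, ∃ c ∈ groundedSeq att n, att c b := by
            intro b hb
            rcases IH b hb with hg | ⟨c, hc, hcb⟩
            · exact absurd hg (h b hb)
            · obtain ⟨_, ⟨n, rfl⟩, hc⟩ := hc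
              exact ⟨n, c, hc, hcb⟩
          classical
          choose f hf using fun b (hb : att b a) => hatt b hb
          set N := Finset.univ.sup (fun b => if hb : att b a then f b hb else 0) with hN
          refine mem_grounded (n := N + 1) ?_
          intro b hb
          obtain ⟨c, hc, hcb⟩ := hf b hb
          refine ⟨c, groundedSeq_mono att ?_ hc, hcb⟩
          have : (if h' : att b a then f b h' else 0) ≤ N :=
            Finset.le_sup (f := fun b => if h' : att b a then f b h' else 0) (Finset.mem_univ b)
          simpa [hb] using this
    intro a ha
    rcases key a with h | h
    · exact absurd h ha
    · exact h
end

section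
/- For any classifier C : P(X × Y) × X → Y, the induced inference relation ⊢_C is cautiously monotonic if and only if it satisfies cut. -/
namespace Classifier

variable {X Y : Type}

/-- Sentences of the language `L`: atoms `(x,y)` and negations `¬(x,y)`. -/
inductive Sentence (X Y : Type) where
  | atom : X × Y → Sentence X Y
  | neg : X × Y → Sentence X Y

/-- `D ⊢_C (x,y)` iff `C(D,x) = y`. -/
def entails (C : Set (X × Y) → X → Y) (D : Set (X × Y)) (x : X) (y : Y) : Prop :=
  C D x = y

/-- `D ⊢_C ¬(x,y)` iff there is `y' ≠ y` with `C(D,x) = y'`. -/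
def entailsNeg (C : Set (X × Y) → X → Y) (D : Set (X × Y)) (x : X) (y : Y) : Prop :=
  ∃ y', y' ≠ y ∧ C D x = y'

/-- `D ⊢_C s` for a sentence `s` of the language. -/
def sat (C : Set (X × Y) → X → Y) (D : Set (X × Y)) : Sentence X Y → Prop
  | .atom (x, y) => C D x = y
  | .neg (x, y) => C D x ≠ y

/-- Cautious monotonicity: if `D ⊢_C a` (for an atom `a`) and `D ⊢_C q`,
then `D ∪ {a} ⊢_C q`. -/
def cautiousMono (C : Set (X × Y) → X → Y) : Prop :=
  ∀ (D : Set (X × Y)) (a : X × Y) (q : Sentence X Y),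
    sat C D (.atom a) → sat C D q → sat C (insert a D) q

/-- Cut: if `D ⊢_C a` (for an atom `a`) and `D ∪ {a} ⊢_C q`, then `D ⊢_C q`. -/
def cut (C : Set (X × Y) → X → Y) : Prop :=
  ∀ (D : Set (X × Y)) (a : X × Y) (q : Sentence X Y),
    sat C D (.atom a) → sat C (insert a D) q → sat C D q

/-- Rational monotonicity: if `D ⊢_C q` and `D ⊬_C ¬a`, then `D ∪ {a} ⊢_C q`. -/
def rationalMono (C : Set (X × Y) → X → Y) : Prop :=
  ∀ (D : Set (X × Y)) (a : X × Y) (q : Sentence X Y),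
    sat C D q → ¬ sat C D (.neg a) → sat C (insert a D) q

end Classifier

namespace Classifier

/-- `⊢_C` is cautiously monotonic iff it satisfies cut. -/
theorem cautiousMono_iff_cut {X Y : Type} (C : Set (X × Y) → X → Y) :
    cautiousMono C ↔ cut C := by
  constructor
  · intro h D a q ha hq
    have key : ∀ x, C (insert a D) x = C D x := fun x =>
      h D a (.atom (x, C D x)) ha rfl
    cases q with
    | atom p => cases p with | mk x y => exact (key x).symm.trans hq
    | neg p => cases p with | mk x y => simpa [sat, key x] using hq
  · intro h D a q ha hq
    have key : ∀ x, C (insert a D) x = C D x := fun x =>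
      (h D a (.atom (x, C (insert a D) x)) ha rfl).symm
    cases q with
    | atom p => cases p with | mk x y => exact (key x).trans hq
    | neg p => cases p with | mk x y => simpa [sat, key x] using hq

end Classifier
end

section
/- Let D be a coherent casebase, N_1 a characterisation not in D, o_1 an outcome, and θ = (θ_C, θ_o) ∈ D such that the new-case argument (N_1,?) defends θ in the AF mined from D and N_1. If θ_o ≠ o_1, then (N_1,o_1) attacks θ in the AF mined from D ∪ {(N_1,o_1)} (and any new case). -/
namespace AACBR

/-- In an AF with arguments `args` and attack `att`, a set `E` defends argument `a`
iff every attacker of `a` (within `args`) is attacked by some element of `E`. -/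
def defends {A : Type} (args : Set A) (att : A → A → Prop) (E : Set A) (a : A) : Prop :=
  ∀ b ∈ args, att b a → ∃ c ∈ E, att c b

/-- `G_0` is the set of unattacked arguments; `G_{i+1}` is the set of arguments
defended by `G_i`. -/
def groundedSeq {A : Type} (args : Set A) (att : A → A → Prop) : ℕ → Set A
  | 0 => {a ∈ args | ∀ b ∈ args, ¬ att b a}
  | n + 1 => {a ∈ args | defends args att (groundedSeq args att n) a}

/-- The grounded extension `⋃ i, G_i`. -/
def grounded {A : Type} (args : Set A) (att : A → A → Prop) : Set A :=
  ⋃ i, groundedSeq args att i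

variable {X : Type}

/-- Cases are pairs of a characterisation (in the partially ordered set `X`, where
`α ≤ β` reads "`α` is less specific than `β`") and one of the two outcomes
(modelled as `Bool`). Attack between labelled cases of the casebase `cb`
(which includes the default argument): `a` attacks `b` iff their outcomes differ,
`a` is at least as specific as `b`, and no case of `cb` with the same outcome as
`a` is strictly in between. -/
def cbAtt [PartialOrder X] (cb : Set (X × Bool)) (a b : X × Bool) : Prop :=
  a ∈ cb ∧ b ∈ cb ∧ a.2 ≠ b.2 ∧ b.1 ≤ a.1 ∧
    ¬ ∃ g ∈ cb, g.2 = a.2 ∧ b.1 < g.1 ∧ g.1 < a.1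

/-- The arguments of the AF mined from casebase `D`, default argument `(dC, dO)`
and a new case: `none` is the new-case argument, `some c` the labelled cases. -/
def minedArgs (D : Set (X × Bool)) (dC : X) (dO : Bool) : Set (Option (X × Bool)) :=
  insert none (Option.some '' insert (dC, dO) D)

/-- The attack relation of the (regular) AF mined from `D`, default `(dC, dO)` and
new case `N`: labelled cases attack each other as in `cbAtt`, and the new-case
argument attacks exactly the labelled cases `b` that are irrelevant to it,
i.e. with `¬ b.1 ≤ N`. -/
def minedAtt [PartialOrder X] (D : Set (X × Bool)) (dC : X) (dO : Bool) (N : X) :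
    Option (X × Bool) → Option (X × Bool) → Prop
  | some a, some b => cbAtt (insert (dC, dO) D) a b
  | none, some b => b ∈ insert (dC, dO) D ∧ ¬ b.1 ≤ N
  | _, none => False

/-- The grounded extension of the AF mined from `D` and new case `N`. -/
def minedGrounded [PartialOrder X] (D : Set (X × Bool)) (dC : X) (dO : Bool) (N : X) :
    Set (Option (X × Bool)) :=
  grounded (minedArgs D dC dO) (minedAtt D dC dO N)

open Classical in
/-- The AA-CBR_⪰ prediction for `N`: the default outcome `dO` if the default
argument is in the grounded extension, and the other outcome otherwise. -/
noncomputable def predict [PartialOrder X] (D : Set (X × Bool)) (dC : X) (dO : Bool)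
    (N : X) : Bool :=
  if some (dC, dO) ∈ minedGrounded D dC dO N then dO else !dO

/-- A casebase is coherent if no characterisation occurs with two outcomes. -/
def coherent (D : Set (X × Bool)) : Prop :=
  ∀ a ∈ D, ∀ b ∈ D, a.1 = b.1 → a.2 = b.2

/-- A case `a ∈ D` is nearest to `N` iff `a.1 ⪯ N`, maximally so. -/
def nearest [PartialOrder X] (D : Set (X × Bool)) (N : X) (a : X × Bool) : Prop :=
  a ∈ D ∧ a.1 ≤ N ∧ ¬ ∃ b ∈ D, a.1 < b.1 ∧ b.1 ≤ N

end AACBR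

/-! A case `g` blocking the attack of `(N₁, o₁)` on `θ` would lie strictly between `θ` and `N₁`
with outcome `o₁`. It is then already in the old casebase, so it yields an attacker of `θ` in the
old AF that is still below `N₁`, which the new-case argument cannot counter-attack. -/

namespace AACBR

variable {X : Type} [PartialOrder X]

/-- The attacker is a minimal case with `a`'s outcome between `b` and `a`; finiteness of `cb`
makes it exist. -/
theorem exists_cbAtt_of_le {cb : Set (X × Bool)} (hcb : cb.Finite) {a b : X × Bool}
    (ha : a ∈ cb) (hb : b ∈ cb) (hab : a.2 ≠ b.2) (hba : b.1 ≤ a.1) :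
    ∃ c, cbAtt cb c b ∧ c.2 = a.2 ∧ c.1 ≤ a.1 := by
  set S : Set (X × Bool) := {c ∈ cb | c.2 = a.2 ∧ b.1 ≤ c.1 ∧ c.1 ≤ a.1}
  have hSfin : S.Finite := hcb.subset fun _ hc => hc.1
  obtain ⟨c, ⟨hc, hc2, hbc, hca⟩, hmin⟩ :=
    hSfin.exists_minimalFor Prod.fst S ⟨a, ha, rfl, hba, le_rfl⟩
  refine ⟨c, ⟨hc, hb, hc2 ▸ hab, hbc, ?_⟩, hc2, hca⟩
  rintro ⟨g, hg, hg2, hbg, hgc⟩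
  exact hgc.not_ge (hmin ⟨hg, hg2.trans hc2, hbg.le, hgc.le.trans hca⟩ hgc.le)

section DefendedByNewCase

variable {D : Set (X × Bool)} {dC : X} {dO : Bool} {N : X} {θ : X × Bool}

theorem le_of_defends_none
    (hdef : defends (minedArgs D dC dO) (minedAtt D dC dO N) {none} (some θ))
    (hθ : θ ∈ insert (dC, dO) D) : θ.1 ≤ N := by
  by_contra hθN
  obtain ⟨_, rfl, hatt⟩ := hdef none (Set.mem_insert _ _) ⟨hθ, hθN⟩
  exact hatt

theorem not_le_of_defends_none
    (hdef : defends (minedArgs D dC dO) (minedAtt D dC dO N) {none} (some θ))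
    {η : X × Bool} (hηθ : minedAtt D dC dO N (some η) (some θ)) : ¬ η.1 ≤ N := by
  obtain ⟨_, rfl, hatt⟩ :=
    hdef (some η) (Set.mem_insert_of_mem _ ⟨η, hηθ.1, rfl⟩) hηθ
  exact hatt.2

end DefendedByNewCase

theorem entering_case_attacks_defended_general {X : Type} [PartialOrder X]
    (D : Set (X × Bool)) (hfin : D.Finite)
    (dC : X) (dO : Bool)
    (N₁ : X) (o₁ : Bool)
    (θ : X × Bool) (hθ : θ ∈ D)
    (hdef : defends (minedArgs D dC dO) (minedAtt D dC dO N₁) {none} (some θ))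
    (ho : θ.2 ≠ o₁) (N₂ : X) :
    minedAtt (insert (N₁, o₁) D) dC dO N₂ (some (N₁, o₁)) (some θ) := by
  have hθcb : θ ∈ insert (dC, dO) D := Set.mem_insert_of_mem _ hθ
  refine ⟨Set.mem_insert_of_mem _ (Set.mem_insert _ _),
    Set.mem_insert_of_mem _ (Set.mem_insert_of_mem _ hθ), ho.symm,
    le_of_defends_none hdef hθcb, ?_⟩
  rintro ⟨g, hg, hg2, hθg, hgN⟩
  have hgcb : g ∈ insert (dC, dO) D := by
    rcases hg with rfl | rfl | hg
    exacts [Set.mem_insert _ _, absurd hgN (lt_irrefl _), Set.mem_insert_of_mem _ hg]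
  obtain ⟨η, hηθ, -, hηg⟩ := exists_cbAtt_of_le (hfin.insert _) hgcb hθcb (hg2 ▸ ho.symm) hθg.le
  exact not_le_of_defends_none hdef hηθ (hηg.trans hgN.le)

/-- Let `D` be coherent, `N₁` a characterisation not occurring in `D`, `o₁` an
outcome, and `θ ∈ D` a case defended by the new-case argument in the AF mined
from `D` and `N₁`. If `θ`'s outcome differs from `o₁`, then `(N₁,o₁)` attacks
`θ` in the AF mined from `D ∪ {(N₁,o₁)}` and any new case `N₂`. -/
theorem entering_case_attacks_defended {X : Type} [PartialOrder X]
    (D : Set (X × Bool)) (hfin : D.Finite) (hcoh : coherent D)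
    (dC : X) (dO : Bool) (hleast : ∀ x : X, dC ≤ x)
    (N₁ : X) (o₁ : Bool) (hnew : ∀ a ∈ D, a.1 ≠ N₁)
    (θ : X × Bool) (hθ : θ ∈ D)
    (hdef : defends (minedArgs D dC dO) (minedAtt D dC dO N₁) {none} (some θ))
    (ho : θ.2 ≠ o₁) (N₂ : X) :
    minedAtt (insert (N₁, o₁) D) dC dO N₂ (some (N₁, o₁)) (some θ) :=
  entering_case_attacks_defended_general D hfin dC dO N₁ o₁ θ hθ hdef ho N₂

end AACBR
end
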